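/- Let f ∈ ℂ[x,y,z] be homogeneous of degree d ≥ 1 not divisible by z, g(x,y) = f(x,y,1), and s an integer. Then the map φ_s : AR(f)_s → AR(g)_{≤s} induced by φ(a,b,c) = (θ(a) − x·θ(c), θ(b) − y·θ(c), d·θ(c)) is an isomorphism of ℂ-vector spaces, where AR(f)_s is the degree-s graded piece and AR(g)_{≤s} = {ρ' ∈ AR(g) : ρ' = 0 or sdeg(ρ') ≤ s}. -/

import Mathlib

open MvPolynomial

noncomputable section

/-- Dehomogenization `θ : ℂ[x,y,z] → ℂ[x,y]`, `u ↦ u(x,y,1)`. -/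
def theta (u : MvPolynomial (Fin 3) ℂ) : MvPolynomial (Fin 2) ℂ :=
  aeval ![X 0, X 1, 1] u

/-- The syzygy-degree `sdeg(α,β,γ) = max(deg(x·γ + d·α), deg(y·γ + d·β), deg γ)`. -/
def sdeg (d : ℕ)
    (ρ : MvPolynomial (Fin 2) ℂ × MvPolynomial (Fin 2) ℂ × MvPolynomial (Fin 2) ℂ) : ℕ :=
  max (totalDegree (X 0 * ρ.2.2 + (d : MvPolynomial (Fin 2) ℂ) * ρ.1))
    (max (totalDegree (X 1 * ρ.2.2 + (d : MvPolynomial (Fin 2) ℂ) * ρ.2.1))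
      (totalDegree ρ.2.2))

/-- `AR(f)_s`: the degree-`s` homogeneous piece of the graded module of Jacobian
syzygies of `f`, as a `ℂ`-vector subspace of `S³`. -/
def ARfs (f : MvPolynomial (Fin 3) ℂ) (s : ℕ) :
    Submodule ℂ (MvPolynomial (Fin 3) ℂ × MvPolynomial (Fin 3) ℂ × MvPolynomial (Fin 3) ℂ) where
  carrier := {ρ |
    ρ.1 * pderiv (0 : Fin 3) f + ρ.2.1 * pderiv (1 : Fin 3) f + ρ.2.2 * pderiv (2 : Fin 3) f = 0 ∧
    ρ.1.IsHomogeneous s ∧ ρ.2.1.IsHomogeneous s ∧ ρ.2.2.IsHomogeneous s}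
  add_mem' := by
    rintro a b ⟨ha, ha1, ha2, ha3⟩ ⟨hb, hb1, hb2, hb3⟩
    refine ⟨?_, ha1.add hb1, ha2.add hb2, ha3.add hb3⟩
    simp only [Prod.fst_add, Prod.snd_add]
    linear_combination ha + hb
  zero_mem' := by
    refine ⟨by simp, ?_, ?_, ?_⟩ <;> exact isHomogeneous_zero _ _ _
  smul_mem' := by
    rintro c a ⟨ha, ha1, ha2, ha3⟩
    refine ⟨?_, ?_, ?_, ?_⟩
    · simp only [Prod.smul_fst, Prod.smul_snd, smul_eq_C_mul]
      linear_combination C c * ha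
    · simpa [smul_eq_C_mul] using (isHomogeneous_C (Fin 3) c).mul ha1
    · simpa [smul_eq_C_mul] using (isHomogeneous_C (Fin 3) c).mul ha2
    · simpa [smul_eq_C_mul] using (isHomogeneous_C (Fin 3) c).mul ha3

/-- `AR(g)_{≤ s}`: syzygies of `g` which are zero or have syzygy-degree at most `s`,
as a `ℂ`-vector subspace of `R³`. -/
def ARgle (g : MvPolynomial (Fin 2) ℂ) (d s : ℕ) :
    Submodule ℂ (MvPolynomial (Fin 2) ℂ × MvPolynomial (Fin 2) ℂ × MvPolynomial (Fin 2) ℂ) where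
  carrier := {ρ |
    ρ.1 * pderiv (0 : Fin 2) g + ρ.2.1 * pderiv (1 : Fin 2) g + ρ.2.2 * g = 0 ∧
    (ρ = 0 ∨ sdeg d ρ ≤ s)}
  add_mem' := by
    rintro a b ⟨ha, hda⟩ ⟨hb, hdb⟩
    constructor
    · simp only [Prod.fst_add, Prod.snd_add]
      linear_combination ha + hb
    · rcases hda with h | h
      · rw [h, zero_add]; exact hdb
      rcases hdb with h' | h'
      · rw [h', add_zero]; exact Or.inr h
      right
      simp only [sdeg, Prod.fst_add, Prod.snd_add]
      have e1 : X 0 * (a.2.2 + b.2.2) + (d : MvPolynomial (Fin 2) ℂ) * (a.1 + b.1) =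
          (X 0 * a.2.2 + (d : MvPolynomial (Fin 2) ℂ) * a.1) +
          (X 0 * b.2.2 + (d : MvPolynomial (Fin 2) ℂ) * b.1) := by ring
      have e2 : X 1 * (a.2.2 + b.2.2) + (d : MvPolynomial (Fin 2) ℂ) * (a.2.1 + b.2.1) =
          (X 1 * a.2.2 + (d : MvPolynomial (Fin 2) ℂ) * a.2.1) +
          (X 1 * b.2.2 + (d : MvPolynomial (Fin 2) ℂ) * b.2.1) := by ring
      rw [e1, e2]
      have t1 := totalDegree_add (X 0 * a.2.2 + (d : MvPolynomial (Fin 2) ℂ) * a.1)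
        (X 0 * b.2.2 + (d : MvPolynomial (Fin 2) ℂ) * b.1)
      have t2 := totalDegree_add (X 1 * a.2.2 + (d : MvPolynomial (Fin 2) ℂ) * a.2.1)
        (X 1 * b.2.2 + (d : MvPolynomial (Fin 2) ℂ) * b.2.1)
      have t3 := totalDegree_add a.2.2 b.2.2
      simp only [sdeg] at h h'
      omega
  zero_mem' := by
    exact ⟨by simp, Or.inl rfl⟩
  smul_mem' := by
    rintro c a ⟨ha, hda⟩
    constructor
    · simp only [Prod.smul_fst, Prod.smul_snd, smul_eq_C_mul]
      linear_combination C c * ha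
    · rcases hda with h | h
      · left; rw [h, smul_zero]
      right
      simp only [sdeg, Prod.smul_fst, Prod.smul_snd]
      have e1 : X 0 * (c • a.2.2) + (d : MvPolynomial (Fin 2) ℂ) * (c • a.1) =
          c • (X 0 * a.2.2 + (d : MvPolynomial (Fin 2) ℂ) * a.1) := by
        simp only [smul_eq_C_mul]; ring
      have e2 : X 1 * (c • a.2.2) + (d : MvPolynomial (Fin 2) ℂ) * (c • a.2.1) =
          c • (X 1 * a.2.2 + (d : MvPolynomial (Fin 2) ℂ) * a.2.1) := by
        simp only [smul_eq_C_mul]; ring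
      rw [e1, e2]
      have t1 : (c • (X 0 * a.2.2 + (d : MvPolynomial (Fin 2) ℂ) * a.1)).totalDegree ≤
          (X 0 * a.2.2 + (d : MvPolynomial (Fin 2) ℂ) * a.1).totalDegree :=
        totalDegree_smul_le _ _
      have t2 : (c • (X 1 * a.2.2 + (d : MvPolynomial (Fin 2) ℂ) * a.2.1)).totalDegree ≤
          (X 1 * a.2.2 + (d : MvPolynomial (Fin 2) ℂ) * a.2.1).totalDegree :=
        totalDegree_smul_le _ _
      have t3 : (c • a.2.2).totalDegree ≤ a.2.2.totalDegree := totalDegree_smul_le _ _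
      simp only [sdeg] at h
      omega

/-!
Dehomogenization `θ` is a linear isomorphism from forms of degree `s` onto polynomials of degree
`≤ s`, the inverse being homogenization `p ↦ z^s p(x/z, y/z)`. Now `φ = L ∘ θ³` with
`L(α, β, γ) = (α - xγ, β - yγ, dγ)`, which is invertible as `d ≠ 0`, and `sdeg ρ'` is the largest
degree of a component of `d • L⁻¹ ρ'`; so `θ³` identifies `(S_s)³` with the triples of syzygy-degree
`≤ s`. Dehomogenizing Euler's identity `x f_x + y f_y + z f_z = d f` shows that `φ` sends syzygies
of `f` to syzygies of `g`. Conversely, a syzygy of `g` homogenizes to a triple whose pairing with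
`∇f` is a form of degree `s + d - 1` with vanishing dehomogenization, hence zero.
-/

local notation "S" => MvPolynomial (Fin 3) ℂ
local notation "R" => MvPolynomial (Fin 2) ℂ

def dropLast (m : Fin 3 →₀ ℕ) : Fin 2 →₀ ℕ :=
  Finsupp.equivFunOnFinite.symm ![m 0, m 1]

def padLast (s : ℕ) (m : Fin 2 →₀ ℕ) : Fin 3 →₀ ℕ :=
  Finsupp.equivFunOnFinite.symm ![m 0, m 1, s - m.degree]

lemma degree_fin_two (m : Fin 2 →₀ ℕ) : m.degree = m 0 + m 1 := by
  rw [Finsupp.degree_eq_sum, Fin.sum_univ_two]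

lemma degree_fin_three (m : Fin 3 →₀ ℕ) : m.degree = m 0 + m 1 + m 2 := by
  rw [Finsupp.degree_eq_sum, Fin.sum_univ_three]

lemma dropLast_padLast (s : ℕ) (m : Fin 2 →₀ ℕ) : dropLast (padLast s m) = m := by
  ext i; fin_cases i <;> rfl

lemma padLast_dropLast {s : ℕ} {m : Fin 3 →₀ ℕ} (hm : m.degree = s) :
    padLast s (dropLast m) = m := by
  rw [degree_fin_three] at hm
  ext i; fin_cases i
  · rfl
  · rfl
  · show s - (dropLast m).degree = m 2
    rw [degree_fin_two]
    change s - (m 0 + m 1) = m 2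
    omega

lemma degree_padLast {s : ℕ} {m : Fin 2 →₀ ℕ} (hm : m.degree ≤ s) :
    (padLast s m).degree = s := by
  rw [degree_fin_three]
  change m 0 + m 1 + (s - m.degree) = s
  rw [degree_fin_two] at hm ⊢
  omega

lemma degree_dropLast_le (m : Fin 3 →₀ ℕ) : (dropLast m).degree ≤ m.degree := by
  rw [degree_fin_three, degree_fin_two]
  exact Nat.le_add_right _ _

lemma theta_add (u v : S) : theta (u + v) = theta u + theta v := map_add _ u v

lemma theta_mul (u v : S) : theta (u * v) = theta u * theta v := map_mul _ u v

lemma theta_monomial (m : Fin 3 →₀ ℕ) (c : ℂ) :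
    theta (monomial m c) = monomial (dropLast m) c := by
  rw [theta, aeval_monomial, monomial_eq, Finsupp.prod_fintype _ _ (fun _ => pow_zero _),
    Finsupp.prod_fintype _ _ (fun _ => pow_zero _)]
  simp [Fin.prod_univ_three, Fin.prod_univ_two, algebraMap_eq, dropLast]

def homogenize (s : ℕ) : R →ₗ[ℂ] S :=
  AddMonoidAlgebra.mapDomainLinearMap ℂ ℂ (padLast s)

lemma homogenize_monomial (s : ℕ) (m : Fin 2 →₀ ℕ) (c : ℂ) :
    homogenize s (monomial m c) = monomial (padLast s m) c :=
  AddMonoidAlgebra.mapDomainLinearMap_single _ _ _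

lemma theta_homogenize (s : ℕ) (p : R) : theta (homogenize s p) = p := by
  induction p using MvPolynomial.induction_on' with
  | monomial m c => rw [homogenize_monomial, theta_monomial, dropLast_padLast]
  | add p q hp hq => rw [map_add, theta_add, hp, hq]

lemma isHomogeneous_homogenize {s : ℕ} {p : R} (hp : p.totalDegree ≤ s) :
    (homogenize s p).IsHomogeneous s := by
  rw [← p.support_sum_monomial_coeff, map_sum]
  refine IsHomogeneous.sum _ _ _ fun m hm => ?_
  rw [homogenize_monomial]
  exact isHomogeneous_monomial _ (degree_padLast ((le_totalDegree hm).trans hp))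

lemma homogenize_theta {s : ℕ} {q : S} (hq : q.IsHomogeneous s) :
    homogenize s (theta q) = q := by
  rw [← q.support_sum_monomial_coeff]
  simp only [theta, map_sum]
  refine Finset.sum_congr rfl fun m hm => ?_
  rw [← theta, theta_monomial, homogenize_monomial, padLast_dropLast]
  rw [Finsupp.degree_eq_weight_one]
  exact hq (mem_support_iff.mp hm)

lemma eq_zero_of_theta_eq_zero {s : ℕ} {q : S} (hq : q.IsHomogeneous s) (h : theta q = 0) :
    q = 0 := by
  rw [← homogenize_theta hq, h, map_zero]

lemma totalDegree_theta_le (q : S) : (theta q).totalDegree ≤ q.totalDegree := by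
  conv_lhs => rw [← q.support_sum_monomial_coeff, theta, map_sum]
  refine totalDegree_finsetSum_le fun m hm => ?_
  rw [← theta, theta_monomial]
  exact (totalDegree_monomial_le _ _).trans ((degree_dropLast_le m).trans (le_totalDegree hm))

lemma theta_pderiv_castSucc (i : Fin 2) (u : S) :
    theta (pderiv i.castSucc u) = pderiv i (theta u) := by
  induction u using MvPolynomial.induction_on with
  | C c => simp [theta]
  | add p q hp hq => rw [map_add, theta_add, theta_add, hp, hq, map_add]
  | mul_X p j hp =>
    simp only [theta, Derivation.leibniz, map_add, map_mul, smul_eq_mul] at *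
    rw [hp]
    fin_cases i <;> fin_cases j <;> simp [pderiv_X]

lemma theta_euler {d : ℕ} {f : S} (hf : f.IsHomogeneous d) :
    X 0 * pderiv 0 (theta f) + X 1 * pderiv 1 (theta f) + theta (pderiv 2 f) =
      (d : R) * theta f := by
  have h := congrArg theta hf.sum_X_mul_pderiv
  rw [← theta_pderiv_castSucc 0, ← theta_pderiv_castSucc 1]
  simpa [theta, Fin.sum_univ_three, nsmul_eq_mul] using h

lemma totalDegree_natCast_mul_le (d : ℕ) (p : R) : ((d : R) * p).totalDegree ≤ p.totalDegree :=
  (totalDegree_mul _ _).trans (by rw [← map_natCast C, totalDegree_C, zero_add])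

lemma totalDegree_C_mul_le (c : ℂ) (p : R) : (C c * p).totalDegree ≤ p.totalDegree :=
  (totalDegree_mul _ _).trans (by rw [totalDegree_C, zero_add])

def phi (d : ℕ) : S × S × S →ₗ[ℂ] R × R × R where
  toFun ρ := (theta ρ.1 - X 0 * theta ρ.2.2, theta ρ.2.1 - X 1 * theta ρ.2.2, (d : R) * theta ρ.2.2)
  map_add' ρ σ := by
    simp only [theta, Prod.fst_add, Prod.snd_add, map_add, Prod.mk_add_mk]
    congr 1 <;> [ring; congr 1 <;> ring]
  map_smul' c ρ := by
    simp only [theta, Prod.smul_fst, Prod.smul_snd, map_smul, Prod.smul_mk, RingHom.id_apply,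
      smul_sub, mul_smul_comm]

def phiInv (d s : ℕ) (ρ : R × R × R) : S × S × S :=
  (homogenize s (C (d : ℂ)⁻¹ * (X 0 * ρ.2.2 + (d : R) * ρ.1)),
    homogenize s (C (d : ℂ)⁻¹ * (X 1 * ρ.2.2 + (d : R) * ρ.2.1)),
    homogenize s (C (d : ℂ)⁻¹ * ρ.2.2))

lemma C_inv_natCast_mul_natCast {σ K : Type*} [Field K] [CharZero K] {d : ℕ} (hd : d ≠ 0) :
    C (d : K)⁻¹ * (d : MvPolynomial σ K) = 1 := by
  rw [← map_natCast C, ← C_mul, inv_mul_cancel₀ (Nat.cast_ne_zero.mpr hd), C_1]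

lemma phi_mem_ARgle {f : S} {d s : ℕ} (hf : f.IsHomogeneous d) {ρ : S × S × S}
    (hρ : ρ ∈ ARfs f s) : phi d ρ ∈ ARgle (theta f) d s := by
  obtain ⟨hsyz, ha, hb, hc⟩ := hρ
  have hsyzθ : theta ρ.1 * pderiv 0 (theta f) + theta ρ.2.1 * pderiv 1 (theta f) +
      theta ρ.2.2 * theta (pderiv 2 f) = 0 := by
    rw [← theta_pderiv_castSucc 0, ← theta_pderiv_castSucc 1]
    simpa [theta] using congrArg theta hsyz
  have hdeg : ∀ q : S, q.IsHomogeneous s → ((d : R) * theta q).totalDegree ≤ s := fun q hq =>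
    (totalDegree_natCast_mul_le d _).trans ((totalDegree_theta_le q).trans hq.totalDegree_le)
  refine ⟨?_, Or.inr ?_⟩
  · show (theta ρ.1 - X 0 * theta ρ.2.2) * _ + (theta ρ.2.1 - X 1 * theta ρ.2.2) * _ +
      (d : R) * theta ρ.2.2 * theta f = 0
    linear_combination hsyzθ - theta ρ.2.2 * theta_euler hf
  · have e0 : X 0 * ((d : R) * theta ρ.2.2) + (d : R) * (theta ρ.1 - X 0 * theta ρ.2.2) =
        (d : R) * theta ρ.1 := by ring
    have e1 : X 1 * ((d : R) * theta ρ.2.2) + (d : R) * (theta ρ.2.1 - X 1 * theta ρ.2.2) =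
        (d : R) * theta ρ.2.1 := by ring
    simp only [sdeg, phi, LinearMap.coe_mk, AddHom.coe_mk, e0, e1]
    exact max_le (hdeg _ ha) (max_le (hdeg _ hb) (hdeg _ hc))

lemma phiInv_mem_ARfs {f : S} {d s : ℕ} (hf : f.IsHomogeneous d) {ρ : R × R × R}
    (hρ : ρ ∈ ARgle (theta f) d s) : phiInv d s ρ ∈ ARfs f s := by
  obtain ⟨hsyz, hρs⟩ := hρ
  have hsdeg : sdeg d ρ ≤ s := hρs.elim (fun h => by simp [h, sdeg]) id
  simp only [sdeg, max_le_iff] at hsdeg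
  obtain ⟨hα, hβ, hγ⟩ := hsdeg
  have hhom : ∀ p : R, p.totalDegree ≤ s → (homogenize s (C (d : ℂ)⁻¹ * p)).IsHomogeneous s :=
    fun p hp => isHomogeneous_homogenize ((totalDegree_C_mul_le _ _).trans hp)
  have ha := hhom _ hα
  have hb := hhom _ hβ
  have hc := hhom _ hγ
  refine ⟨?_, ha, hb, hc⟩
  refine eq_zero_of_theta_eq_zero
    (((ha.mul hf.pderiv).add (hb.mul hf.pderiv)).add (hc.mul hf.pderiv)) ?_
  simp only [phiInv, theta_add, theta_mul, theta_homogenize]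
  rw [show theta (pderiv 0 f) = _ from theta_pderiv_castSucc 0 f,
    show theta (pderiv 1 f) = _ from theta_pderiv_castSucc 1 f]
  linear_combination C (d : ℂ)⁻¹ * ((d : R) * hsyz + ρ.2.2 * theta_euler hf)

lemma phiInv_phi {f : S} {d s : ℕ} (hd : d ≠ 0) {ρ : S × S × S} (hρ : ρ ∈ ARfs f s) :
    phiInv d s (phi d ρ) = ρ := by
  obtain ⟨-, ha, hb, hc⟩ := hρ
  have hdinv := C_inv_natCast_mul_natCast (σ := Fin 2) (K := ℂ) hd
  have key : ∀ q : S, q.IsHomogeneous s → ∀ p : R, p = (d : R) * theta q →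
      homogenize s (C (d : ℂ)⁻¹ * p) = q := fun q hq p hp => by
    rw [hp, ← mul_assoc, hdinv, one_mul, homogenize_theta hq]
  simp only [phiInv, phi, LinearMap.coe_mk, AddHom.coe_mk]
  rw [key _ ha _ (by ring), key _ hb _ (by ring), key _ hc _ (by ring)]

lemma phi_phiInv {d : ℕ} (hd : d ≠ 0) (s : ℕ) (ρ : R × R × R) : phi d (phiInv d s ρ) = ρ := by
  have hdinv := C_inv_natCast_mul_natCast (σ := Fin 2) (K := ℂ) hd
  simp only [phiInv, phi, LinearMap.coe_mk, AddHom.coe_mk, theta_homogenize]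
  refine Prod.ext ?_ (Prod.ext ?_ ?_)
  · linear_combination ρ.1 * hdinv
  · linear_combination ρ.2.1 * hdinv
  · linear_combination ρ.2.2 * hdinv

theorem phi_s_linearEquiv_general (f : MvPolynomial (Fin 3) ℂ) (d : ℕ) (hd : 1 ≤ d)
    (hf : f.IsHomogeneous d) (s : ℕ) :
    ∃ e : ARfs f s ≃ₗ[ℂ] ARgle (theta f) d s,
      ∀ ρ : ARfs f s,
        (e ρ : MvPolynomial (Fin 2) ℂ × MvPolynomial (Fin 2) ℂ × MvPolynomial (Fin 2) ℂ) =
          (theta ρ.1.1 - X 0 * theta ρ.1.2.2,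
           theta ρ.1.2.1 - X 1 * theta ρ.1.2.2,
           (d : MvPolynomial (Fin 2) ℂ) * theta ρ.1.2.2) := by
  have hd0 : d ≠ 0 := by omega
  exact ⟨{ (phi d).restrict fun _ => phi_mem_ARgle hf with
      invFun := fun ρ => ⟨phiInv d s ρ, phiInv_mem_ARfs hf ρ.2⟩
      left_inv := fun ρ => Subtype.ext (phiInv_phi hd0 ρ.2)
      right_inv := fun ρ => Subtype.ext (phi_phiInv hd0 s ρ) }, fun _ => rfl⟩

/-- For `f ∈ ℂ[x,y,z]` homogeneous of degree `d ≥ 1` not divisible by `z`,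
`g = f(x,y,1)` and any `s`, the map `φ_s : AR(f)_s → AR(g)_{≤s}` induced by
`φ(a,b,c) = (θ(a) − x·θ(c), θ(b) − y·θ(c), d·θ(c))` is an isomorphism of
`ℂ`-vector spaces. -/
theorem phi_s_linearEquiv (f : MvPolynomial (Fin 3) ℂ) (d : ℕ) (hd : 1 ≤ d)
    (hf : f.IsHomogeneous d) (hz : ¬ (X (2 : Fin 3) ∣ f)) (s : ℕ) :
    ∃ e : ARfs f s ≃ₗ[ℂ] ARgle (theta f) d s,
      ∀ ρ : ARfs f s,
        (e ρ : MvPolynomial (Fin 2) ℂ × MvPolynomial (Fin 2) ℂ × MvPolynomial (Fin 2) ℂ) =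
          (theta ρ.1.1 - X 0 * theta ρ.1.2.2,
           theta ρ.1.2.1 - X 1 * theta ρ.1.2.2,
           (d : MvPolynomial (Fin 2) ℂ) * theta ρ.1.2.2) :=
  phi_s_linearEquiv_general f d hd hf s
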